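/- A torsion-free commutative ring A is binomial (i.e., all binomial coefficients a(a−1)···(a−n+1)/n! of elements a ∈ A exist in A inside A ⊗ ℚ) if and only if for every a ∈ A there exists a ring homomorphism Int(ℤ) → A sending X to a. -/

import Mathlib

/-!
The binomial polynomials `binom(X, n) = X(X-1)⋯(X-n+1)/n!` span `Int(ℤ)` over `ℤ`: by Newton's
interpolation formula a polynomial is `∑ₖ (Δᵏf)(0) binom(X, k)`, and the iterated forward
differences of an integer-valued polynomial are integers. Since `A` is torsion-free, hence flat
over `ℤ`, it embeds into `ℚ ⊗ A` via `a ↦ 1 ⊗ a`. So evaluation at `1 ⊗ a`, a ring map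
`ℚ[X] → ℚ ⊗ A`, sends `Int(ℤ)` into `A` as soon as it sends every `binom(X, n)` there, which is
what binomiality says. Conversely a homomorphism `φ` with `φ X = a` sends `binom(X, n)` to an
element `b` with `n! b = a(a-1)⋯(a-n+1)`.
-/

set_option linter.unusedSectionVars false
open Polynomial TensorProduct

variable (D K : Type*) [CommRing D] [IsDomain D] [Field K] [Algebra D K] [IsFractionRing D K]

/-- The ring of integer-valued polynomials `Int(D) ⊆ K[X]`. -/
noncomputable def IntD : Subalgebra D (Polynomial K) :=
  ⨅ a : D, Subalgebra.comap ((Polynomial.aeval (algebraMap D K a)).restrictScalars D)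
    (Algebra.ofId D K).range

theorem mem_IntD {f : Polynomial K} :
    f ∈ IntD D K ↔
      ∀ a : D, ∃ d : D, algebraMap D K d = Polynomial.eval (algebraMap D K a) f := by
  simp [IntD, Algebra.mem_iInf, Subalgebra.mem_comap, Algebra.ofId_apply, Algebra.mem_bot,
    Set.mem_range]

/-- `X` as an element of `Int(D)`. -/
noncomputable def Xint : IntD D K := ⟨Polynomial.X, (mem_IntD D K).mpr fun a => ⟨a, by simp⟩⟩

open Finset fwdDiff

theorem descPochhammer_eq_prod_range (R : Type*) [CommRing R] (n : ℕ) :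
    descPochhammer R n = ∏ i ∈ range n, (X - (i : R[X])) := by
  induction n with
  | zero => simp
  | succ n ih => rw [descPochhammer_succ_right, ih, prod_range_succ]

noncomputable def binomialPoly (n : ℕ) : ℚ[X] := (n.factorial : ℚ)⁻¹ • descPochhammer ℚ n

theorem factorial_smul_binomialPoly (n : ℕ) :
    (n.factorial : ℚ) • binomialPoly n = descPochhammer ℚ n :=
  smul_inv_smul₀ (by positivity) _

theorem binomialPoly_eval_intCast (n : ℕ) (x : ℤ) :
    (binomialPoly n).eval (x : ℚ) = Ring.choose x n := by
  have h : (descPochhammer ℚ n).eval (x : ℚ) = (n.factorial * Ring.choose x n : ℤ) := by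
    rw [← descPochhammer_map (Int.castRingHom ℚ), eval_intCast_map, eq_intCast, Int.cast_id,
      eval_eq_smeval, Ring.descPochhammer_eq_factorial_smul_choose, nsmul_eq_mul]
  rw [binomialPoly, eval_smul, h, smul_eq_mul]
  push_cast
  exact inv_mul_cancel_left₀ (by positivity) _

theorem binomialPoly_eval_natCast (n k : ℕ) : (binomialPoly n).eval (k : ℚ) = k.choose n := by
  simpa [Ring.choose_natCast] using binomialPoly_eval_intCast n k

theorem binomialPoly_mem_IntD (n : ℕ) : binomialPoly n ∈ IntD ℤ ℚ :=
  (mem_IntD ℤ ℚ).mpr fun x => ⟨Ring.choose x n, by simp [binomialPoly_eval_intCast]⟩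

/-- Newton's forward-difference interpolation formula. -/
theorem eq_sum_fwdDiff_iter_smul_binomialPoly (f : ℚ[X]) :
    f = ∑ k ∈ range (f.natDegree + 1), Δ_[1] ^[k] f.eval 0 • binomialPoly k := by
  refine eq_of_infinite_eval_eq _ _ (Set.infinite_range_of_injective Nat.cast_injective |>.mono ?_)
  rintro _ ⟨n, rfl⟩
  have hn : f.eval (n : ℚ) = ∑ k ∈ range (n + 1), n.choose k • Δ_[1] ^[k] f.eval 0 := by
    simpa using shift_eq_sum_fwdDiff_iter 1 f.eval n 0
  simp only [Set.mem_ofPred_eq, hn, eval_finsetSum, eval_smul, binomialPoly_eval_natCast,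
    smul_eq_mul, nsmul_eq_mul]
  set N := n + f.natDegree + 1
  rw [sum_subset (range_subset_range.mpr (by omega : n + 1 ≤ N)) fun k _ hk => ?_,
    sum_subset (range_subset_range.mpr (by omega : f.natDegree + 1 ≤ N)) fun k _ hk => ?_]
  · exact sum_congr rfl fun _ _ => mul_comm _ _
  · rw [fwdDiff_iter_eq_zero_of_degree_lt (by simpa using hk), Pi.zero_apply, zero_mul]
  · rw [Nat.choose_eq_zero_of_lt (by simpa using hk), Nat.cast_zero, zero_mul]

theorem fwdDiff_iter_eval_zero_mem_range_intCast {f : ℚ[X]} (hf : f ∈ IntD ℤ ℚ) (k : ℕ) :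
    Δ_[1] ^[k] f.eval 0 ∈ (Int.castAddHom ℚ).range := by
  rw [fwdDiff_iter_eq_sum_shift]
  refine sum_mem fun j _ => zsmul_mem ?_ _
  obtain ⟨m, hm⟩ := (mem_IntD ℤ ℚ).mp hf j
  exact ⟨m, by simpa using hm⟩

theorem mem_span_binomialPoly {f : ℚ[X]} (hf : f ∈ IntD ℤ ℚ) :
    f ∈ Submodule.span ℤ (Set.range binomialPoly) := by
  rw [eq_sum_fwdDiff_iter_smul_binomialPoly f]
  refine Submodule.sum_mem _ fun k _ => ?_
  obtain ⟨m, hm⟩ := fwdDiff_iter_eval_zero_mem_range_intCast hf k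
  rw [← hm, Int.coe_castAddHom, Int.cast_smul_eq_zsmul]
  exact Submodule.smul_mem _ m (Submodule.subset_span ⟨k, rfl⟩)

theorem aeval_mem_of_mem_span_binomialPoly {B : Type*} [CommRing B] [Algebra ℚ B]
    (S : Subring B) {b : B} (hb : ∀ n, aeval b (binomialPoly n) ∈ S) {f : ℚ[X]}
    (hf : f ∈ Submodule.span ℤ (Set.range binomialPoly)) : aeval b f ∈ S := by
  induction hf using Submodule.span_induction with
  | mem _ h => obtain ⟨n, rfl⟩ := h; exact hb n
  | zero => simp
  | add _ _ _ _ h₁ h₂ => rw [map_add]; exact add_mem h₁ h₂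
  | smul m _ _ h => rw [map_zsmul]; exact zsmul_mem h m

theorem exists_ringHom_IntD_of_aeval_binomialPoly_mem {A B : Type*} [CommRing A] [CommRing B]
    [Algebra ℚ B] (ι : A →+* B) (hι : Function.Injective ι) (a : A)
    (ha : ∀ n, aeval (ι a) (binomialPoly n) ∈ ι.range) :
    ∃ φ : IntD ℤ ℚ →+* A, φ (Xint ℤ ℚ) = a := by
  let e := AlgEquiv.ofInjective ι.toIntAlgHom hι
  let ψ : IntD ℤ ℚ →ₐ[ℤ] B := ((aeval (ι a)).restrictScalars ℤ).comp (IntD ℤ ℚ).val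
  have hψ : ∀ f, ψ f ∈ ι.toIntAlgHom.range := fun f =>
    aeval_mem_of_mem_span_binomialPoly ι.range ha (mem_span_binomialPoly f.2)
  exact ⟨(e.symm.toAlgHom.comp (ψ.codRestrict _ hψ)).toRingHom,
    e.symm_apply_eq.mpr (Subtype.ext (aeval_X _))⟩

theorem aeval_binomialPoly_eq_of_mul_factorial_eq {B : Type*} [CommRing B] [Algebra ℚ B]
    {c x : B} {n : ℕ} (h : x * n.factorial = ∏ i ∈ range n, (c - i)) :
    aeval c (binomialPoly n) = x := by
  have hc : aeval c (descPochhammer ℚ n) = ∏ i ∈ range n, (c - i) := by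
    simp [descPochhammer_eq_prod_range]
  rw [binomialPoly, map_smul, hc, ← h, mul_comm, ← nsmul_eq_mul, ← Nat.cast_smul_eq_nsmul ℚ,
    inv_smul_smul₀ (by positivity)]

noncomputable def binomialIntD (n : ℕ) : IntD ℤ ℚ := ⟨binomialPoly n, binomialPoly_mem_IntD n⟩

theorem factorial_mul_binomialIntD (n : ℕ) :
    (n.factorial : IntD ℤ ℚ) * binomialIntD n = ∏ i ∈ range n, (Xint ℤ ℚ - i) := by
  apply Subtype.ext
  simp only [binomialIntD, Xint, MulMemClass.coe_mul, SubringClass.coe_natCast]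
  rw [← nsmul_eq_mul, ← Nat.cast_smul_eq_nsmul ℚ, factorial_smul_binomialPoly,
    descPochhammer_eq_prod_range]
  simp

theorem factorial_mul_map_binomialIntD {A : Type*} [CommRing A] (φ : IntD ℤ ℚ →+* A) (n : ℕ) :
    n.factorial * φ (binomialIntD n) = ∏ i ∈ range n, (φ (Xint ℤ ℚ) - i) := by
  simpa using congrArg φ (factorial_mul_binomialIntD n)

theorem stmt_2 (A : Type*) [CommRing A] [NoZeroSMulDivisors ℤ A] :
    (∀ (a : A) (n : ℕ), 0 < n →
        ∃ b : A, ((1 : ℚ) ⊗ₜ[ℤ] b) * (n.factorial : ℚ ⊗[ℤ] A) =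
          (1 : ℚ) ⊗ₜ[ℤ] ∏ i ∈ Finset.range n, (a - (i : A))) ↔
      ∀ a : A, ∃ φ : IntD ℤ ℚ →+* A, φ (Xint ℤ ℚ) = a := by
  let ι : A →+* ℚ ⊗[ℤ] A := Algebra.TensorProduct.includeRight.toRingHom
  have hι : Function.Injective ι :=
    Algebra.TensorProduct.includeRight_injective (algebraMap ℤ ℚ).injective_int
  constructor
  · intro H a
    refine exists_ringHom_IntD_of_aeval_binomialPoly_mem ι hι a fun n => ?_
    obtain ⟨b, hb⟩ : ∃ b, ι b * n.factorial = ι (∏ i ∈ range n, (a - i)) :=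
      n.eq_zero_or_pos.elim (fun h => ⟨1, by simp [h]⟩) (H a n)
    exact ⟨b, (aeval_binomialPoly_eq_of_mul_factorial_eq (by simpa using hb)).symm⟩
  · intro H a n _
    obtain ⟨φ, rfl⟩ := H a
    refine ⟨φ (binomialIntD n), ?_⟩
    have h := congrArg ι (factorial_mul_map_binomialIntD φ n)
    rw [map_mul, map_natCast, mul_comm] at h
    exact h
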